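/- On a probability space, let S_0, S_1, …, S_{t−1} be independent, identically distributed integrable random N×N real symmetric matrices, let ψ ∈ ℝ, and let D be a deterministic N×N real diagonal matrix. Let n_0, …, n_{t−1} be random vectors in ℝ^N, independent of the S_τ's and of each other, with E[n_τ] = 0 and E[n_τ n_τᵀ] = σ² I. Define w̃_0 = 0 and w̃_τ = ψ S_{τ−1} w̃_{τ−1} + (ψ S_{τ−1} − D) n_{τ−1} for τ ≥ 1, and let M_l = E[ Φ_{0:l−1}ᵀ Φ_{0:l−1} ] where Φ_{0:l−1} = S_{l−1} ⋯ S_0 (with M_0 = I). Assuming all the stated expectations exist, tr( E[w̃_t w̃_tᵀ] ) = σ² Σ_{τ=0}^{t−1} ψ^{2(t−τ−1)} tr( E[ (ψ S_0 − D)ᵀ M_{t−τ−1} (ψ S_0 − D) ] ), where the final expectation is over a single fresh copy S_0 of the common distribution. -/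

import Mathlib

open MeasureTheory ProbabilityTheory Matrix

/-- The (entrywise) measurable space structure on real matrices. -/
instance matMS {N : ℕ} : MeasurableSpace (Matrix (Fin N) (Fin N) ℝ) :=
  (inferInstance : MeasurableSpace (Fin N → Fin N → ℝ))

/-- Entrywise expectation of a random matrix. -/
noncomputable def mExp {Ω : Type} [MeasurableSpace Ω] {N : ℕ} (μ : Measure Ω)
    (X : Ω → Matrix (Fin N) (Fin N) ℝ) : Matrix (Fin N) (Fin N) ℝ :=
  Matrix.of fun i j => ∫ ω, X ω i j ∂μ

/-- The left-continued matrix product `Φ_{a:b−1} = S_{b−1} S_{b−2} ⋯ S_a`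
(equal to `I` when `b ≤ a`). -/
def phiProd {Ω : Type} {N : ℕ} (S : ℕ → Ω → Matrix (Fin N) (Fin N) ℝ) (a b : ℕ) (ω : Ω) :
    Matrix (Fin N) (Fin N) ℝ :=
  (((List.range (b - a)).reverse).map (fun j => S (a + j) ω)).prod

/-- Heterogeneous index type for the joint family of random matrices (`Sum.inl`) and
random vectors (`Sum.inr`). -/
def famType2 (N : ℕ) {ι κ : Type} : ι ⊕ κ → Type
  | Sum.inl _ => Matrix (Fin N) (Fin N) ℝ
  | Sum.inr _ => Fin N → ℝ

/-- Measurable space structures for the joint family. -/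
def famMS2 (N : ℕ) {ι κ : Type} : (i : ι ⊕ κ) → MeasurableSpace (famType2 N i)
  | Sum.inl _ => matMS
  | Sum.inr _ => (inferInstance : MeasurableSpace (Fin N → ℝ))

/-- The joint family: matrix `S t` at `Sum.inl t`, vector `n t` at `Sum.inr t`. -/
def fam2 {Ω : Type} {N : ℕ} {ι κ : Type} (S : ι → Ω → Matrix (Fin N) (Fin N) ℝ)
    (n : κ → Ω → Fin N → ℝ) : (i : ι ⊕ κ) → Ω → famType2 N i
  | Sum.inl t => S t
  | Sum.inr t => n t

/-!
Unrolling the recursion gives `w̃_t = ∑_τ ψ^(t-τ-1) Φ_{τ+1:t-1} (ψ S_τ - D) n_τ`. The noise is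
centred, white and independent of the matrices, so only the diagonal terms survive in `E |w̃_t|²`,
which is `σ² ∑_τ ψ^(2(t-τ-1)) E ‖Φ_{τ+1:t-1} (ψ S_τ - D)‖²_F`. The two factors of
`Φ_{τ+1:t-1} (ψ S_τ - D)` depend on disjoint sets of the `S_ρ`, so this expectation is
`tr E[(ψ S_τ - D)ᵀ E[Φᵀ Φ] (ψ S_τ - D)]`, and identical distribution moves `E[Φᵀ Φ]` to
`M_{t-τ-1}` and `S_τ` to `S_0`.
-/

open Finset

attribute [local instance] famMS2

theorem ProbabilityTheory.iIndepFun.indepFun_of_measurable_iSup {Ω ι γ δ : Type*}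
    [MeasurableSpace Ω] {μ : Measure Ω} {β : ι → Type*} {m : ∀ i, MeasurableSpace (β i)}
    {f : ∀ i, Ω → β i} (hf : iIndepFun f μ) (hmeas : ∀ i, Measurable (f i))
    {A B : Set ι} (hAB : Disjoint A B) [MeasurableSpace γ] [MeasurableSpace δ]
    {F : Ω → γ} {G : Ω → δ} (hF : Measurable[⨆ i ∈ A, (m i).comap (f i)] F)
    (hG : Measurable[⨆ i ∈ B, (m i).comap (f i)] G) : IndepFun F G μ := by
  rw [IndepFun_iff_Indep]
  exact indep_of_indep_of_le_left (indep_of_indep_of_le_right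
    (indep_iSup_of_disjoint (fun i => (hmeas i).comap_le) hf.iIndep hAB) hG.comap_le) hF.comap_le

theorem MeasureTheory.integral_sq_sum_of_orthogonal {Ω ι : Type*} [MeasurableSpace Ω]
    {μ : Measure Ω} {s : Finset ι} {X : ι → Ω → ℝ}
    (hint : ∀ p ∈ s, ∀ q ∈ s, Integrable (fun ω => X p ω * X q ω) μ)
    (horth : ∀ p ∈ s, ∀ q ∈ s, p ≠ q → ∫ ω, X p ω * X q ω ∂μ = 0) :
    ∫ ω, (∑ p ∈ s, X p ω) ^ 2 ∂μ = ∑ p ∈ s, ∫ ω, X p ω ^ 2 ∂μ := by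
  simp_rw [sq, Finset.sum_mul_sum]
  rw [integral_finsetSum _ fun p hp => integrable_finsetSum _ fun q hq => hint p hp q hq]
  refine Finset.sum_congr rfl fun p hp => ?_
  rw [integral_finsetSum _ fun q hq => hint p hp q hq, Finset.sum_eq_single_of_mem p hp]
  exact fun q hq hqp => horth p hp q hq (Ne.symm hqp)

theorem MeasureTheory.integral_sum_sum {Ω ι κ : Type*} [MeasurableSpace Ω] {μ : Measure Ω}
    [Fintype ι] [Fintype κ] {f : ι → κ → Ω → ℝ} (hf : ∀ i j, Integrable (f i j) μ) :
    ∫ ω, ∑ i, ∑ j, f i j ω ∂μ = ∑ i, ∑ j, ∫ ω, f i j ω ∂μ := by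
  rw [integral_finsetSum _ fun i _ => integrable_finsetSum _ fun j _ => hf i j]
  exact sum_congr rfl fun i _ => integral_finsetSum _ fun j _ => hf i j

theorem measurable_matrix_apply {N : ℕ} (i j : Fin N) :
    Measurable fun X : Matrix (Fin N) (Fin N) ℝ => X i j :=
  (measurable_pi_apply j).comp (measurable_pi_apply i)

theorem measurable_smul_sub_const {N : ℕ} (ψ : ℝ) (D : Matrix (Fin N) (Fin N) ℝ) :
    Measurable fun X : Matrix (Fin N) (Fin N) ℝ => ψ • X - D :=
  measurable_pi_lambda _ fun i => measurable_pi_lambda _ fun j => by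
    simpa using ((measurable_matrix_apply i j).const_mul ψ).sub_const (D i j)

section EntrySpan

variable {Ω : Type} {N : ℕ} (S : ℕ → Ω → Matrix (Fin N) (Fin N) ℝ) (t : ℕ)

/- `entryMonomial` is the integrand of the integrability hypotheses, so `entrySpan₂ u` consists of
integrable polynomials in the entries of the `S ρ`, `ρ ∈ u`. Products of two elements of
`entrySpan₁ u` (one entry of each matrix per monomial) lie in `entrySpan₂ u`. -/
def entryMonomial (a b c d : ℕ → Fin N) (e f : ℕ → ℕ) (ω : Ω) : ℝ :=
  ∏ ρ ∈ range t, S ρ ω (a ρ) (b ρ) ^ e ρ * S ρ ω (c ρ) (d ρ) ^ f ρ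

def entrySpan₁ (u : Finset ℕ) : Submodule ℝ (Ω → ℝ) :=
  Submodule.span ℝ {F | ∃ a b e, (∀ ρ ∉ u, e ρ = 0) ∧ F = entryMonomial S t a b a b e 0}

def entrySpan₂ (u : Finset ℕ) : Submodule ℝ (Ω → ℝ) :=
  Submodule.span ℝ
    {F | ∃ a b c d e f, (∀ ρ ∉ u, e ρ = 0 ∧ f ρ = 0) ∧ F = entryMonomial S t a b c d e f}

variable {S t} {u v : Finset ℕ}

theorem entrySpan₁_mono (huv : u ⊆ v) : entrySpan₁ S t u ≤ entrySpan₁ S t v := by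
  refine Submodule.span_mono ?_
  rintro F ⟨a, b, e, he, rfl⟩
  exact ⟨a, b, e, fun ρ hρ => he ρ fun h => hρ (huv h), rfl⟩

theorem const_mem_entrySpan₁ (i : Fin N) (r : ℝ) : (fun _ => r) ∈ entrySpan₁ S t u := by
  have hone : (fun _ => (1 : ℝ)) ∈ entrySpan₁ S t u :=
    Submodule.subset_span ⟨fun _ => i, fun _ => i, 0, fun _ _ => rfl, by
      funext ω; simp [entryMonomial]⟩
  convert Submodule.smul_mem _ r hone using 1
  funext ω
  simp

theorem entry_mem_entrySpan₁ {ρ : ℕ} (hρ : ρ < t) (i j : Fin N) :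
    (fun ω => S ρ ω i j) ∈ entrySpan₁ S t {ρ} := by
  refine Submodule.subset_span ⟨fun _ => i, fun _ => j, Pi.single ρ 1, fun ρ' hρ' => ?_, ?_⟩
  · simp_all
  · funext ω
    rw [entryMonomial, Finset.prod_eq_single_of_mem ρ (mem_range.2 hρ)]
    · simp
    · intro ρ' _ hne; simp [hne]

theorem mul_mem_entrySpan₁_of_disjoint (huv : Disjoint u v) {F G : Ω → ℝ}
    (hF : F ∈ entrySpan₁ S t u) (hG : G ∈ entrySpan₁ S t v) :
    (fun ω => F ω * G ω) ∈ entrySpan₁ S t (u ∪ v) := by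
  refine (?_ : entrySpan₁ S t u * entrySpan₁ S t v ≤ _) (Submodule.mul_mem_mul hF hG)
  rw [entrySpan₁, entrySpan₁, Submodule.span_mul_span]
  refine Submodule.span_mono ?_
  rintro _ ⟨_, ⟨a, b, e, he, rfl⟩, _, ⟨a', b', e', he', rfl⟩, rfl⟩
  refine ⟨fun ρ => if ρ ∈ u then a ρ else a' ρ, fun ρ => if ρ ∈ u then b ρ else b' ρ,
    e + e', fun ρ hρ => ?_, ?_⟩
  · simp only [mem_union, not_or] at hρ
    simp [he ρ hρ.1, he' ρ hρ.2]
  · funext ω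
    simp only [entryMonomial, Pi.mul_apply, ← prod_mul_distrib]
    refine prod_congr rfl fun ρ _ => ?_
    by_cases hρ : ρ ∈ u
    · simp [hρ, he' ρ (disjoint_left.1 huv hρ)]
    · simp [hρ, he ρ hρ]

theorem mul_mem_entrySpan₂ {F G : Ω → ℝ} (hF : F ∈ entrySpan₁ S t u)
    (hG : G ∈ entrySpan₁ S t v) : (fun ω => F ω * G ω) ∈ entrySpan₂ S t (u ∪ v) := by
  refine (?_ : entrySpan₁ S t u * entrySpan₁ S t v ≤ _) (Submodule.mul_mem_mul hF hG)
  rw [entrySpan₁, entrySpan₁, Submodule.span_mul_span]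
  refine Submodule.span_mono ?_
  rintro _ ⟨_, ⟨a, b, e, he, rfl⟩, _, ⟨a', b', e', he', rfl⟩, rfl⟩
  refine ⟨a, b, a', b', e, e', fun ρ hρ => ?_, ?_⟩
  · simp only [mem_union, not_or] at hρ
    exact ⟨he ρ hρ.1, he' ρ hρ.2⟩
  · funext ω
    simp only [entryMonomial, Pi.mul_apply, ← prod_mul_distrib]
    refine prod_congr rfl fun ρ _ => ?_
    simp

theorem integrable_of_mem_entrySpan₂ [MeasurableSpace Ω] {μ : Measure Ω}
    (hIntS : ∀ (a b c d : ℕ → Fin N) (e f : ℕ → ℕ),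
      Integrable (fun ω => ∏ τ ∈ Finset.range t,
        (S τ ω (a τ) (b τ)) ^ (e τ) * (S τ ω (c τ) (d τ)) ^ (f τ)) μ)
    {F : Ω → ℝ} (hF : F ∈ entrySpan₂ S t u) : Integrable F μ := by
  induction hF using Submodule.span_induction with
  | mem F hF => obtain ⟨a, b, c, d, e, f, -, rfl⟩ := hF; exact hIntS a b c d e f
  | zero => exact integrable_zero _ _ _
  | add F G _ _ hF hG => exact hF.add hG
  | smul r F _ hF => exact hF.smul r

theorem smul_sub_apply_mem_entrySpan₁ {ρ : ℕ} (hρ : ρ < t) (ψ : ℝ)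
    (D : Matrix (Fin N) (Fin N) ℝ) (i j : Fin N) :
    (fun ω => (ψ • S ρ ω - D) i j) ∈ entrySpan₁ S t {ρ} := by
  have hfun : (fun ω => (ψ • S ρ ω - D) i j) = ψ • (fun ω => S ρ ω i j) - fun _ => D i j := by
    funext ω
    simp
  rw [hfun]
  exact sub_mem (Submodule.smul_mem _ ψ (entry_mem_entrySpan₁ hρ i j)) (const_mem_entrySpan₁ i _)

end EntrySpan

section PhiProd

variable {Ω : Type} {N : ℕ} {S : ℕ → Ω → Matrix (Fin N) (Fin N) ℝ} {t : ℕ}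

theorem phiProd_of_le {a b : ℕ} (h : b ≤ a) (ω : Ω) : phiProd S a b ω = 1 := by
  simp [phiProd, Nat.sub_eq_zero_of_le h]

theorem phiProd_succ {a b : ℕ} (h : a ≤ b) (ω : Ω) :
    phiProd S a (b + 1) ω = S b ω * phiProd S a b ω := by
  rw [phiProd, phiProd, show b + 1 - a = b - a + 1 by omega, List.range_succ]
  simp [show a + (b - a) = b by omega]

theorem mul_apply_mem_entrySpan₁ {u v : Finset ℕ} (huv : Disjoint u v)
    {X Y : Ω → Matrix (Fin N) (Fin N) ℝ}
    (hX : ∀ i j, (fun ω => X ω i j) ∈ entrySpan₁ S t u)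
    (hY : ∀ i j, (fun ω => Y ω i j) ∈ entrySpan₁ S t v) (i j : Fin N) :
    (fun ω => (X ω * Y ω) i j) ∈ entrySpan₁ S t (u ∪ v) := by
  simp only [mul_apply, ← Finset.sum_fn]
  exact Submodule.sum_mem _ fun k _ => mul_mem_entrySpan₁_of_disjoint huv (hX i k) (hY k j)

theorem phiProd_apply_mem_entrySpan₁ (a : ℕ) {b : ℕ} (hb : b ≤ t) (i j : Fin N) :
    (fun ω => phiProd S a b ω i j) ∈ entrySpan₁ S t (Ico a b) := by
  induction b generalizing i j with
  | zero => simpa [phiProd_of_le (Nat.zero_le a)] using const_mem_entrySpan₁ i _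
  | succ b ih =>
    rcases lt_or_ge b a with hba | hab
    · simpa [phiProd_of_le (show b + 1 ≤ a by omega)] using const_mem_entrySpan₁ i _
    · simp only [phiProd_succ hab]
      have hmem := mul_apply_mem_entrySpan₁ (by simp) (entry_mem_entrySpan₁ (t := t) hb)
        (ih (by omega)) i j
      rwa [← Finset.insert_eq, ← Nat.Ico_succ_right_eq_insert_Ico hab] at hmem

theorem eq_sum_pow_smul_phiProd_mulVec {ψ : ℝ} {v w : ℕ → Ω → Fin N → ℝ} (hw0 : ∀ ω, w 0 ω = 0)
    (hw : ∀ τ < t, ∀ ω, w (τ + 1) ω = (ψ • S τ ω) *ᵥ w τ ω + v τ ω) {k : ℕ} (hk : k ≤ t)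
    (ω : Ω) : w k ω = ∑ τ ∈ range k, ψ ^ (k - τ - 1) • (phiProd S (τ + 1) k ω *ᵥ v τ ω) := by
  induction k with
  | zero => simp [hw0]
  | succ k ih =>
    rw [hw k hk ω, ih (by omega), sum_range_succ, phiProd_of_le le_rfl, mulVec_sum]
    congr 1
    · refine sum_congr rfl fun τ hτ => ?_
      have hτk : τ < k := mem_range.1 hτ
      rw [phiProd_succ hτk, smul_mulVec, mulVec_smul, ← mulVec_mulVec, smul_smul, ← pow_succ',
        show k - τ - 1 + 1 = k + 1 - τ - 1 by omega]
    · simp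

end PhiProd

section JointFamily

variable {Ω : Type} {N t : ℕ} {S : ℕ → Ω → Matrix (Fin N) (Fin N) ℝ} {n : ℕ → Ω → Fin N → ℝ}

variable (S n) in
abbrev famSigma (A : Set (Fin t ⊕ Fin t)) : MeasurableSpace Ω :=
  ⨆ i ∈ A, (famMS2 N i).comap (fam2 (fun τ : Fin t => S τ) (fun τ : Fin t => n τ) i)

def matIdx (t : ℕ) (u : Finset ℕ) : Set (Fin t ⊕ Fin t) := Sum.inl '' {ρ | (ρ : ℕ) ∈ u}

theorem measurable_entry_famSigma {A : Set (Fin t ⊕ Fin t)} {ρ : Fin t} (hρ : Sum.inl ρ ∈ A)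
    (a b : Fin N) : Measurable[famSigma S n A] fun ω => S ρ ω a b := by
  have hle : matMS.comap (S ρ) ≤ famSigma S n A :=
    le_iSup₂ (f := fun i (_ : i ∈ A) =>
      (famMS2 N i).comap (fam2 (fun τ : Fin t => S τ) (fun τ : Fin t => n τ) i)) _ hρ
  exact ((measurable_pi_apply b).comp ((measurable_pi_apply a).comp
    (comap_measurable (S ρ)))).mono hle le_rfl

theorem measurable_noise_famSigma {A : Set (Fin t ⊕ Fin t)} {p : Fin t} (hp : Sum.inr p ∈ A)
    (i : Fin N) : Measurable[famSigma S n A] fun ω => n p ω i := by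
  have hle : MeasurableSpace.comap (n p) inferInstance ≤ famSigma S n A :=
    le_iSup₂ (f := fun i (_ : i ∈ A) =>
      (famMS2 N i).comap (fam2 (fun τ : Fin t => S τ) (fun τ : Fin t => n τ) i)) _ hp
  exact ((measurable_pi_apply i).comp (comap_measurable (n p))).mono hle le_rfl

theorem measurable_of_mem_entrySpan₂ {u : Finset ℕ} {F : Ω → ℝ} (hF : F ∈ entrySpan₂ S t u) :
    Measurable[famSigma S n (matIdx t u)] F := by
  induction hF using Submodule.span_induction with
  | mem F hF =>
    obtain ⟨a, b, c, d, e, f, hef, rfl⟩ := hF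
    refine Finset.measurable_prod _ fun ρ hρ => ?_
    by_cases hu : ρ ∈ u
    · have hidx : Sum.inl ⟨ρ, mem_range.1 hρ⟩ ∈ matIdx t u := ⟨_, hu, rfl⟩
      exact ((measurable_entry_famSigma hidx _ _).pow_const _).mul
        ((measurable_entry_famSigma hidx _ _).pow_const _)
    · simp only [(hef ρ hu).1, (hef ρ hu).2, pow_zero, mul_one]
      exact measurable_const
  | zero => exact measurable_const
  | add _ _ _ _ hF hG => exact hF.add hG
  | smul r _ _ hF => exact hF.const_smul r

variable [MeasurableSpace Ω]

theorem measurable_fam2 (hmeas : ∀ τ < t, Measurable (S τ)) (hnmeas : ∀ τ < t, Measurable (n τ))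
    (i : Fin t ⊕ Fin t) : Measurable (fam2 (fun τ : Fin t => S τ) (fun τ : Fin t => n τ) i) := by
  rcases i with τ | τ
  exacts [hmeas τ τ.2, hnmeas τ τ.2]

variable {μ : Measure Ω}
  (hInd : iIndepFun (m := fun i : Fin t ⊕ Fin t => famMS2 N i)
    (fam2 (fun τ : Fin t => S τ) (fun τ : Fin t => n τ)) μ)
  (hfam : ∀ i, Measurable (fam2 (fun τ : Fin t => S τ) (fun τ : Fin t => n τ) i))
include hInd hfam

theorem indepFun_of_mem_entrySpan₂ {u v : Finset ℕ} (huv : Disjoint u v) {F G : Ω → ℝ}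
    (hF : F ∈ entrySpan₂ S t u) (hG : G ∈ entrySpan₂ S t v) : IndepFun F G μ := by
  refine hInd.indepFun_of_measurable_iSup hfam ?_ (measurable_of_mem_entrySpan₂ hF)
    (measurable_of_mem_entrySpan₂ hG)
  rw [matIdx, matIdx, Set.disjoint_image_iff Sum.inl_injective]
  exact Set.disjoint_left.2 fun ρ hu hv => disjoint_left.1 huv hu hv

theorem indepFun_of_mem_entrySpan₂_noise {u : Finset ℕ} {F : Ω → ℝ} (hF : F ∈ entrySpan₂ S t u)
    {p q : ℕ} (hp : p < t) (hq : q < t) (i j : Fin N) :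
    IndepFun F (fun ω => n p ω i * n q ω j) μ := by
  refine hInd.indepFun_of_measurable_iSup hfam
    (Set.isCompl_range_inl_range_inr.disjoint.mono_left (Set.image_subset_range _ _))
    (measurable_of_mem_entrySpan₂ hF) ?_
  exact (measurable_noise_famSigma (A := Set.range Sum.inr) (p := ⟨p, hp⟩) ⟨_, rfl⟩ i).mul
    (measurable_noise_famSigma (A := Set.range Sum.inr) (p := ⟨q, hq⟩) ⟨_, rfl⟩ j)

end JointFamily

section Moments

variable {Ω : Type} [MeasurableSpace Ω] {μ : Measure Ω} {N t : ℕ}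
  {S : ℕ → Ω → Matrix (Fin N) (Fin N) ℝ} {n : ℕ → Ω → Fin N → ℝ}

theorem trace_mExp_vecMulVec_self (x : Ω → Fin N → ℝ) :
    (mExp μ fun ω => vecMulVec (x ω) (x ω)).trace = ∑ i, ∫ ω, x ω i ^ 2 ∂μ := by
  simp [trace, mExp, vecMulVec_apply, sq]

theorem mExp_transpose_mul_self_apply {X : Ω → Matrix (Fin N) (Fin N) ℝ}
    (hX : ∀ i m m', Integrable (fun ω => X ω i m * X ω i m') μ) (m m' : Fin N) :
    mExp μ (fun ω => (X ω)ᵀ * X ω) m m' = ∑ i, ∫ ω, X ω i m * X ω i m' ∂μ := by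
  simp only [mExp, of_apply, mul_apply, transpose_apply]
  exact integral_finsetSum _ fun i _ => hX i m m'

theorem trace_mExp_transpose_mul_mul_self (M : Matrix (Fin N) (Fin N) ℝ)
    {X : Ω → Matrix (Fin N) (Fin N) ℝ}
    (hX : ∀ m m' k, Integrable (fun ω => X ω m k * X ω m' k) μ) :
    (mExp μ fun ω => (X ω)ᵀ * M * X ω).trace
      = ∑ k, ∑ m, ∑ m', M m m' * ∫ ω, X ω m k * X ω m' k ∂μ := by
  refine sum_congr rfl fun k _ => ?_
  have hexp : ∀ ω, ((X ω)ᵀ * M * X ω) k k = ∑ m, ∑ m', M m m' * (X ω m k * X ω m' k) := by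
    intro ω
    simp only [mul_apply, transpose_apply, sum_mul]
    rw [sum_comm]
    exact sum_congr rfl fun m _ => sum_congr rfl fun m' _ => by ring
  simp only [diag_apply, mExp, of_apply, hexp, ← integral_const_mul]
  exact integral_sum_sum fun m m' => (hX m m' k).const_mul _

theorem integrable_noise_mul_noise
    (hIntSn2 : ∀ (p q : ℕ) (i j : Fin N) (a b c d : ℕ → Fin N) (e f : ℕ → ℕ),
      Integrable (fun ω => (∏ τ ∈ Finset.range t,
        (S τ ω (a τ) (b τ)) ^ (e τ) * (S τ ω (c τ) (d τ)) ^ (f τ)) * (n p ω i * n q ω j)) μ)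
    (p q : ℕ) (i j : Fin N) : Integrable (fun ω => n p ω i * n q ω j) μ := by
  simpa using hIntSn2 p q i j (fun _ => i) (fun _ => i) (fun _ => i) (fun _ => i) 0 0

variable (hInd : iIndepFun (m := fun i : Fin t ⊕ Fin t => famMS2 N i)
    (fam2 (fun τ : Fin t => S τ) (fun τ : Fin t => n τ)) μ)
  (hfam : ∀ i, Measurable (fam2 (fun τ : Fin t => S τ) (fun τ : Fin t => n τ) i))
include hInd hfam

theorem integral_noise_mul_noise {σ : ℝ} (hn_mean : ∀ τ < t, ∀ i, ∫ ω, n τ ω i ∂μ = 0)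
    (hn_cov : ∀ τ < t, ∀ i j,
      ∫ ω, n τ ω i * n τ ω j ∂μ = σ ^ 2 * (1 : Matrix (Fin N) (Fin N) ℝ) i j)
    {p q : ℕ} (hp : p < t) (hq : q < t) (i j : Fin N) :
    ∫ ω, n p ω i * n q ω j ∂μ = if p = q ∧ i = j then σ ^ 2 else 0 := by
  by_cases hpq : p = q
  · subst hpq
    by_cases hij : i = j <;> simp [hn_cov p hp, one_apply, hij]
  · have hind : IndepFun (fun ω => n p ω i) (fun ω => n q ω j) μ :=
      hInd.indepFun_of_measurable_iSup hfam (A := {Sum.inr ⟨p, hp⟩}) (B := {Sum.inr ⟨q, hq⟩})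
        (Set.disjoint_singleton.2 fun h => hpq (congrArg Fin.val (Sum.inr_injective h)))
        (measurable_noise_famSigma (Set.mem_singleton _) i)
        (measurable_noise_famSigma (Set.mem_singleton _) j)
    rw [hind.integral_fun_mul_eq_mul_integral
      ((measurable_pi_apply i).comp (hfam (Sum.inr ⟨p, hp⟩))).aestronglyMeasurable
      ((measurable_pi_apply j).comp (hfam (Sum.inr ⟨q, hq⟩))).aestronglyMeasurable]
    simp [hn_mean p hp i, hpq]

variable (hIntS : ∀ (a b c d : ℕ → Fin N) (e f : ℕ → ℕ),
    Integrable (fun ω => ∏ τ ∈ Finset.range t,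
      (S τ ω (a τ) (b τ)) ^ (e τ) * (S τ ω (c τ) (d τ)) ^ (f τ)) μ)
include hIntS

theorem integral_mul_apply_mul_mul_apply {u v : Finset ℕ} (huv : Disjoint u v)
    {X Y : Ω → Matrix (Fin N) (Fin N) ℝ}
    (hX : ∀ i j, (fun ω => X ω i j) ∈ entrySpan₁ S t u)
    (hY : ∀ i j, (fun ω => Y ω i j) ∈ entrySpan₁ S t v) (i k i' k' : Fin N) :
    ∫ ω, (X ω * Y ω) i k * (X ω * Y ω) i' k' ∂μ
      = ∑ m, ∑ m', (∫ ω, X ω i m * X ω i' m' ∂μ) * ∫ ω, Y ω m k * Y ω m' k' ∂μ := by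
  have hXX : ∀ m m', (fun ω => X ω i m * X ω i' m') ∈ entrySpan₂ S t u := fun m m' => by
    simpa only [union_self] using mul_mem_entrySpan₂ (hX i m) (hX i' m')
  have hYY : ∀ m m', (fun ω => Y ω m k * Y ω m' k') ∈ entrySpan₂ S t v := fun m m' => by
    simpa only [union_self] using mul_mem_entrySpan₂ (hY m k) (hY m' k')
  have hind := fun m m' => indepFun_of_mem_entrySpan₂ hInd hfam huv (hXX m m') (hYY m m')
  have hexp : ∀ ω, (X ω * Y ω) i k * (X ω * Y ω) i' k'
      = ∑ m, ∑ m', (X ω i m * X ω i' m') * (Y ω m k * Y ω m' k') := by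
    intro ω
    simp only [mul_apply, sum_mul_sum]
    exact sum_congr rfl fun m _ => sum_congr rfl fun m' _ => by ring
  simp only [hexp]
  refine (integral_sum_sum fun m m' => (hind m m').integrable_mul
    (integrable_of_mem_entrySpan₂ hIntS (hXX m m')) (integrable_of_mem_entrySpan₂ hIntS (hYY m m'))
    ).trans ?_
  exact sum_congr rfl fun m _ => sum_congr rfl fun m' _ =>
    (hind m m').integral_fun_mul_eq_mul_integral
      (integrable_of_mem_entrySpan₂ hIntS (hXX m m')).1
      (integrable_of_mem_entrySpan₂ hIntS (hYY m m')).1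

theorem integral_phiProd_apply_mul_phiProd_apply_shift
    (hid : ∀ τ < t, ∀ τ' < t, IdentDistrib (S τ) (S τ') μ μ) (l : ℕ) {s s' : ℕ}
    (hs : s + l ≤ t) (hs' : s' + l ≤ t) (i m i' m' : Fin N) :
    ∫ ω, phiProd S s (s + l) ω i m * phiProd S s (s + l) ω i' m' ∂μ
      = ∫ ω, phiProd S s' (s' + l) ω i m * phiProd S s' (s' + l) ω i' m' ∂μ := by
  induction l generalizing i i' with
  | zero => simp [phiProd_of_le]
  | succ l ih =>
    have hstep : ∀ s₀, s₀ + (l + 1) ≤ t →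
        ∫ ω, phiProd S s₀ (s₀ + (l + 1)) ω i m * phiProd S s₀ (s₀ + (l + 1)) ω i' m' ∂μ
          = ∑ k, ∑ k', (∫ ω, S (s₀ + l) ω i k * S (s₀ + l) ω i' k' ∂μ) *
              ∫ ω, phiProd S s₀ (s₀ + l) ω k m * phiProd S s₀ (s₀ + l) ω k' m' ∂μ := by
      intro s₀ hs₀
      simp only [← add_assoc, phiProd_succ (Nat.le_add_right s₀ l)]
      exact integral_mul_apply_mul_mul_apply hInd hfam hIntS (by simp)
        (entry_mem_entrySpan₁ (by omega)) (phiProd_apply_mem_entrySpan₁ s₀ (by omega)) i m i' m'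
    rw [hstep s hs, hstep s' hs']
    refine sum_congr rfl fun k _ => sum_congr rfl fun k' _ => ?_
    rw [ih (by omega) (by omega)]
    congr 1
    exact ((hid (s + l) (by omega) (s' + l) (by omega)).comp
      ((measurable_matrix_apply i k).mul (measurable_matrix_apply i' k'))).integral_eq

theorem integral_sq_sum_smul_mulVec_noise {σ : ℝ}
    (hIntSn2 : ∀ (p q : ℕ) (i j : Fin N) (a b c d : ℕ → Fin N) (e f : ℕ → ℕ),
      Integrable (fun ω => (∏ τ ∈ Finset.range t,
        (S τ ω (a τ) (b τ)) ^ (e τ) * (S τ ω (c τ) (d τ)) ^ (f τ)) * (n p ω i * n q ω j)) μ)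
    (hn_mean : ∀ τ < t, ∀ i, ∫ ω, n τ ω i ∂μ = 0)
    (hn_cov : ∀ τ < t, ∀ i j,
      ∫ ω, n τ ω i * n τ ω j ∂μ = σ ^ 2 * (1 : Matrix (Fin N) (Fin N) ℝ) i j)
    {C : ℕ → Ω → Matrix (Fin N) (Fin N) ℝ}
    (hC : ∀ τ < t, ∀ i j, (fun ω => C τ ω i j) ∈ entrySpan₁ S t (range t)) (c : ℕ → ℝ)
    (i : Fin N) :
    ∫ ω, (∑ τ ∈ range t, c τ • (C τ ω *ᵥ n τ ω)) i ^ 2 ∂μ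
      = σ ^ 2 * ∑ τ ∈ range t, c τ ^ 2 * ∑ k, ∫ ω, C τ ω i k ^ 2 ∂μ := by
  set X : ℕ × Fin N → Ω → ℝ := fun p ω => c p.1 * C p.1 ω i p.2 * n p.1 ω p.2
  have hexp : ∀ ω, (∑ τ ∈ range t, c τ • (C τ ω *ᵥ n τ ω)) i
      = ∑ p ∈ range t ×ˢ univ, X p ω := by
    intro ω
    simp [X, Finset.sum_apply, mulVec, dotProduct, sum_product, mul_sum, mul_assoc]
  have hpair : ∀ p ∈ range t ×ˢ univ, ∀ q ∈ range t ×ˢ univ,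
      Integrable (fun ω => X p ω * X q ω) μ ∧ ∫ ω, X p ω * X q ω ∂μ
        = c p.1 * c q.1 * (∫ ω, C p.1 ω i p.2 * C q.1 ω i q.2 ∂μ) *
            if p = q then σ ^ 2 else 0 := by
    rintro ⟨τ, k⟩ hp ⟨τ', k'⟩ hq
    simp only [mem_product, mem_range] at hp hq
    have hF := mul_mem_entrySpan₂ (hC τ hp.1 i k) (hC τ' hq.1 i k')
    have hFint := integrable_of_mem_entrySpan₂ hIntS hF
    have hGint := integrable_noise_mul_noise hIntSn2 τ τ' k k'
    have hind := indepFun_of_mem_entrySpan₂_noise hInd hfam hF hp.1 hq.1 k k'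
    have hXX : (fun ω => X (τ, k) ω * X (τ', k') ω)
        = fun ω => c τ * c τ' * ((C τ ω i k * C τ' ω i k') * (n τ ω k * n τ' ω k')) := by
      funext ω
      simp only [X]
      ring
    rw [hXX, integral_const_mul, hind.integral_fun_mul_eq_mul_integral hFint.1 hGint.1,
      integral_noise_mul_noise hInd hfam hn_mean hn_cov hp.1 hq.1]
    exact ⟨(hind.integrable_mul hFint hGint).const_mul _, by simp [Prod.ext_iff, mul_assoc]⟩
  simp_rw [hexp]
  rw [integral_sq_sum_of_orthogonal (fun p hp q hq => (hpair p hp q hq).1)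
    fun p hp q hq hpq => by rw [(hpair p hp q hq).2, if_neg hpq, mul_zero], sum_product, mul_sum]
  refine sum_congr rfl fun τ hτ => ?_
  rw [mul_sum, mul_sum]
  refine sum_congr rfl fun k _ => ?_
  have hτk : (τ, k) ∈ range t ×ˢ univ := mem_product.2 ⟨hτ, mem_univ k⟩
  simp only [sq, (hpair _ hτk _ hτk).2, if_true]
  ring

theorem sum_integral_sq_phiProd_mul_apply
    (hid : ∀ τ < t, ∀ τ' < t, IdentDistrib (S τ) (S τ') μ μ)
    {A : ℕ → Ω → Matrix (Fin N) (Fin N) ℝ}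
    (hA : ∀ ρ < t, ∀ i j, (fun ω => A ρ ω i j) ∈ entrySpan₁ S t {ρ}) {τ : ℕ} (hτ : τ < t)
    (hAid : IdentDistrib (A τ) (A 0) μ μ) :
    ∑ i, ∑ k, ∫ ω, (phiProd S (τ + 1) t ω * A τ ω) i k ^ 2 ∂μ
      = (mExp μ fun ω => (A 0 ω)ᵀ * mExp μ (fun ω =>
          (phiProd S 0 (t - τ - 1) ω)ᵀ * phiProd S 0 (t - τ - 1) ω) * A 0 ω).trace := by
  set l := t - τ - 1
  have hΦΦ : ∀ i m m', Integrable (fun ω => phiProd S 0 l ω i m * phiProd S 0 l ω i m') μ :=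
    fun i m m' => integrable_of_mem_entrySpan₂ hIntS (mul_mem_entrySpan₂
      (phiProd_apply_mem_entrySpan₁ 0 (by omega) i m)
      (phiProd_apply_mem_entrySpan₁ 0 (by omega) i m'))
  have hAA : ∀ m m' k, Integrable (fun ω => A 0 ω m k * A 0 ω m' k) μ :=
    fun m m' k => integrable_of_mem_entrySpan₂ hIntS
      (mul_mem_entrySpan₂ (hA 0 (by omega) m k) (hA 0 (by omega) m' k))
  have hΦshift : ∀ i m m', ∫ ω, phiProd S (τ + 1) t ω i m * phiProd S (τ + 1) t ω i m' ∂μ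
      = ∫ ω, phiProd S 0 l ω i m * phiProd S 0 l ω i m' ∂μ := by
    intro i m m'
    have h := integral_phiProd_apply_mul_phiProd_apply_shift hInd hfam hIntS hid l
      (s := τ + 1) (s' := 0) (by omega) (by omega) i m i m'
    rwa [show τ + 1 + l = t by omega, zero_add] at h
  have hAshift : ∀ m m' k, ∫ ω, A τ ω m k * A τ ω m' k ∂μ = ∫ ω, A 0 ω m k * A 0 ω m' k ∂μ :=
    fun m m' k =>
      (hAid.comp ((measurable_matrix_apply m k).mul (measurable_matrix_apply m' k))).integral_eq
  rw [trace_mExp_transpose_mul_mul_self _ hAA]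
  simp only [mExp_transpose_mul_self_apply hΦΦ, sq, sum_mul,
    integral_mul_apply_mul_mul_apply hInd hfam hIntS (by simp)
      (phiProd_apply_mem_entrySpan₁ (τ + 1) le_rfl) (hA τ hτ), hΦshift, hAshift]
  rw [sum_comm]
  refine sum_congr rfl fun k _ => ?_
  rw [sum_comm]
  exact sum_congr rfl fun m _ => sum_comm

end Moments

theorem stmt15_general {Ω : Type} [MeasurableSpace Ω] (μ : Measure Ω)
    {N : ℕ} (t : ℕ)
    (S : ℕ → Ω → Matrix (Fin N) (Fin N) ℝ) (n : ℕ → Ω → Fin N → ℝ)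
    (hmeas : ∀ τ < t, Measurable (S τ)) (hnmeas : ∀ τ < t, Measurable (n τ))
    (hid : ∀ τ < t, ∀ τ' < t, IdentDistrib (S τ) (S τ') μ μ)
    (hIndep : iIndepFun (m := fun i : Fin t ⊕ Fin t => famMS2 N i)
      (fam2 (fun τ : Fin t => S τ) (fun τ : Fin t => n τ)) μ)
    (ψ : ℝ) (D : Matrix (Fin N) (Fin N) ℝ) (σ : ℝ)
    (hn_mean : ∀ τ < t, ∀ i, ∫ ω, n τ ω i ∂μ = 0)
    (hn_cov : ∀ τ < t, ∀ i j,
      ∫ ω, n τ ω i * n τ ω j ∂μ = σ ^ 2 * (1 : Matrix (Fin N) (Fin N) ℝ) i j)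
    -- all the expectations appearing in the computation exist:
    (hIntS : ∀ (a b c d : ℕ → Fin N) (e f : ℕ → ℕ),
      Integrable (fun ω => ∏ τ ∈ Finset.range t,
        (S τ ω (a τ) (b τ)) ^ (e τ) * (S τ ω (c τ) (d τ)) ^ (f τ)) μ)
    (hIntSn2 : ∀ (p q : ℕ) (i j : Fin N) (a b c d : ℕ → Fin N) (e f : ℕ → ℕ),
      Integrable (fun ω => (∏ τ ∈ Finset.range t,
        (S τ ω (a τ) (b τ)) ^ (e τ) * (S τ ω (c τ) (d τ)) ^ (f τ)) * (n p ω i * n q ω j)) μ)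
    (w : ℕ → Ω → Fin N → ℝ) (hw0 : ∀ ω, w 0 ω = 0)
    (hw : ∀ τ < t, ∀ ω, w (τ + 1) ω
      = (ψ • S τ ω).mulVec (w τ ω) + (ψ • S τ ω - D).mulVec (n τ ω))
    (M : ℕ → Matrix (Fin N) (Fin N) ℝ)
    (hM : ∀ l, M l = mExp μ (fun ω => (phiProd S 0 l ω)ᵀ * phiProd S 0 l ω)) :
    (mExp μ (fun ω => vecMulVec (w t ω) (w t ω))).trace
      = σ ^ 2 * ∑ τ ∈ Finset.range t, ψ ^ (2 * (t - τ - 1)) *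
          (mExp μ (fun ω =>
            (ψ • S 0 ω - D)ᵀ * M (t - τ - 1) * (ψ • S 0 ω - D))).trace := by
  have hfam := measurable_fam2 hmeas hnmeas
  have hA : ∀ ρ < t, ∀ i j, (fun ω => (ψ • S ρ ω - D) i j) ∈ entrySpan₁ S t {ρ} :=
    fun ρ hρ => smul_sub_apply_mem_entrySpan₁ hρ ψ D
  have hC : ∀ τ < t, ∀ i j, (fun ω => (phiProd S (τ + 1) t ω * (ψ • S τ ω - D)) i j)
      ∈ entrySpan₁ S t (range t) := fun τ hτ i j =>
    entrySpan₁_mono (fun x hx => mem_range.2 (by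
        simp only [mem_union, mem_Ico, mem_singleton] at hx; omega))
      (mul_apply_mem_entrySpan₁ (by simp) (phiProd_apply_mem_entrySpan₁ _ le_rfl) (hA τ hτ) i j)
  have hwt : ∀ ω, w t ω = ∑ τ ∈ range t,
      ψ ^ (t - τ - 1) • ((phiProd S (τ + 1) t ω * (ψ • S τ ω - D)) *ᵥ n τ ω) := fun ω => by
    simp_rw [eq_sum_pow_smul_phiProd_mulVec (v := fun τ ω => (ψ • S τ ω - D) *ᵥ n τ ω) hw0 hw
      le_rfl ω, mulVec_mulVec]
  simp_rw [trace_mExp_vecMulVec_self, hwt, integral_sq_sum_smul_mulVec_noise hIndep hfam hIntS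
    hIntSn2 hn_mean hn_cov hC, ← mul_sum]
  rw [sum_comm]
  congr 1
  refine sum_congr rfl fun τ hτ => ?_
  have hτt := mem_range.1 hτ
  have hAid : IdentDistrib (fun ω => ψ • S τ ω - D) (fun ω => ψ • S 0 ω - D) μ μ :=
    (hid τ hτt 0 (by omega)).comp (measurable_smul_sub_const ψ D)
  rw [← mul_sum, sum_integral_sq_phiProd_mul_apply hIndep hfam hIntS hid
    (A := fun ρ ω => ψ • S ρ ω - D) hA hτt hAid, hM, ← pow_mul, mul_comm 2]

/-- sketch of proof of Proposition 4: finite-time noise power.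
For the recursion `w̃_τ = ψ S_{τ−1} w̃_{τ−1} + (ψ S_{τ−1} − D) n_{τ−1}` driven by i.i.d.
random symmetric matrices `S_0,…,S_{t−1}` and independent zero-mean noise of covariance
`σ² I`, with `M_l = E[Φ_{0:l−1}ᵀ Φ_{0:l−1}]`, assuming the stated expectations exist,
`tr(E[w̃_t w̃_tᵀ]) = σ² Σ_{τ=0}^{t−1} ψ^{2(t−τ−1)} tr(E[(ψ S_0 − D)ᵀ M_{t−τ−1} (ψ S_0 − D)])`. -/
theorem stmt15 {Ω : Type} [MeasurableSpace Ω] (μ : Measure Ω) [IsProbabilityMeasure μ]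
    {N : ℕ} (hN : 0 < N) (t : ℕ)
    (S : ℕ → Ω → Matrix (Fin N) (Fin N) ℝ) (n : ℕ → Ω → Fin N → ℝ)
    (hmeas : ∀ τ < t, Measurable (S τ)) (hnmeas : ∀ τ < t, Measurable (n τ))
    (hsymm : ∀ τ < t, ∀ ω, (S τ ω).IsSymm)
    (hS_int : ∀ τ < t, ∀ i j, Integrable (fun ω => S τ ω i j) μ)
    (hid : ∀ τ < t, ∀ τ' < t, IdentDistrib (S τ) (S τ') μ μ)
    (hIndep : iIndepFun (m := fun i : Fin t ⊕ Fin t => famMS2 N i)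
      (fam2 (fun τ : Fin t => S τ) (fun τ : Fin t => n τ)) μ)
    (ψ : ℝ) (D : Matrix (Fin N) (Fin N) ℝ) (hD : D.IsDiag) (σ : ℝ) (hσ : 0 ≤ σ)
    (hn_mean : ∀ τ < t, ∀ i, ∫ ω, n τ ω i ∂μ = 0)
    (hn_cov : ∀ τ < t, ∀ i j,
      ∫ ω, n τ ω i * n τ ω j ∂μ = σ ^ 2 * (1 : Matrix (Fin N) (Fin N) ℝ) i j)
    -- all the expectations appearing in the computation exist:
    (hIntS : ∀ (a b c d : ℕ → Fin N) (e f : ℕ → ℕ),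
      Integrable (fun ω => ∏ τ ∈ Finset.range t,
        (S τ ω (a τ) (b τ)) ^ (e τ) * (S τ ω (c τ) (d τ)) ^ (f τ)) μ)
    (hIntSn1 : ∀ (p : ℕ) (i : Fin N) (a b c d : ℕ → Fin N) (e f : ℕ → ℕ),
      Integrable (fun ω => (∏ τ ∈ Finset.range t,
        (S τ ω (a τ) (b τ)) ^ (e τ) * (S τ ω (c τ) (d τ)) ^ (f τ)) * n p ω i) μ)
    (hIntSn2 : ∀ (p q : ℕ) (i j : Fin N) (a b c d : ℕ → Fin N) (e f : ℕ → ℕ),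
      Integrable (fun ω => (∏ τ ∈ Finset.range t,
        (S τ ω (a τ) (b τ)) ^ (e τ) * (S τ ω (c τ) (d τ)) ^ (f τ)) * (n p ω i * n q ω j)) μ)
    (w : ℕ → Ω → Fin N → ℝ) (hw0 : ∀ ω, w 0 ω = 0)
    (hw : ∀ τ < t, ∀ ω, w (τ + 1) ω
      = (ψ • S τ ω).mulVec (w τ ω) + (ψ • S τ ω - D).mulVec (n τ ω))
    (M : ℕ → Matrix (Fin N) (Fin N) ℝ)
    (hM : ∀ l, M l = mExp μ (fun ω => (phiProd S 0 l ω)ᵀ * phiProd S 0 l ω)) :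
    (mExp μ (fun ω => vecMulVec (w t ω) (w t ω))).trace
      = σ ^ 2 * ∑ τ ∈ Finset.range t, ψ ^ (2 * (t - τ - 1)) *
          (mExp μ (fun ω =>
            (ψ • S 0 ω - D)ᵀ * M (t - τ - 1) * (ψ • S 0 ω - D))).trace :=
  stmt15_general μ t S n hmeas hnmeas hid hIndep ψ D σ hn_mean hn_cov hIntS hIntSn2 w hw0 hw M hM
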